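/- For every real ε with 0 < ε < 3, for all sufficiently large n : ℕ one has (3 - ε)^n ≤ ((∑ t in Finset.range (n - Nat.sqrt n + 1), (n - Nat.sqrt n).choose (2*t) * catalan t : ℕ) : ℝ); that is, the lower bound for the representation gap of the truncated Motzkin monoid grows exponentially with base 3. -/

import Mathlib

/-!
Adding the binomial expansions of `(2 + 1)^m` and `(-2 + 1)^m` cancels the odd terms:
`3^m + (-1)^m = 2 ∑ₜ C(m, 2t) 4^t`, so `3^m ≤ 3 ∑ₜ C(m, 2t) 4^t`, and `4^t ≤ (2t + 1)(t + 1) catalan t` turns this into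
`3^m ≤ 3 (2m + 1)(m + 1) Motz m`. Removing `√n` from the exponent costs only a factor
`3^√n = e^{o(n)}`, so `3^(n - √n)` eventually exceeds `(3 - ε/2)^n`, which in turn
eventually exceeds `(3 - ε)^n` times any polynomial in `n`.
-/

open Finset Filter

theorem Finset.sum_range_two_mul {M : Type*} [AddCommMonoid M] (N : ℕ) (f : ℕ → M) :
    ∑ k ∈ range (2 * N), f k = ∑ t ∈ range N, (f (2 * t) + f (2 * t + 1)) := by
  induction N with
  | zero => simp
  | succ N ih => rw [Nat.mul_succ, sum_range_succ, sum_range_succ, sum_range_succ, ih, add_assoc]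

theorem add_one_pow_add_neg_add_one_pow {R : Type*} [CommRing R] (x : R) (m : ℕ) :
    (x + 1) ^ m + (-x + 1) ^ m =
      2 * ∑ t ∈ range (m + 1), (m.choose (2 * t) : R) * x ^ (2 * t) := by
  have hpow : ∀ y : R, (y + 1) ^ m = ∑ k ∈ range (2 * (m + 1)), y ^ k * m.choose k := by
    intro y
    rw [add_pow]
    simp only [one_pow, mul_one]
    refine sum_subset (range_subset_range.2 (by omega)) fun k _ hk => ?_
    rw [Nat.choose_eq_zero_of_lt (by simpa using hk), Nat.cast_zero, mul_zero]
  rw [hpow, hpow, ← sum_add_distrib, sum_range_two_mul, mul_sum]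
  refine sum_congr rfl fun t _ => ?_
  rw [(even_two_mul t).neg_pow, (odd_two_mul_add_one t).neg_pow]
  ring

theorem three_pow_le_three_mul_sum_choose_mul_four_pow (m : ℕ) :
    3 ^ m ≤ 3 * ∑ t ∈ range (m + 1), m.choose (2 * t) * 4 ^ t := by
  have hid := add_one_pow_add_neg_add_one_pow (2 : ℤ) m
  norm_num [pow_mul] at hid
  have hS : 1 ≤ ∑ t ∈ range (m + 1), m.choose (2 * t) * 4 ^ t := by
    simpa using single_le_sum (f := fun t => m.choose (2 * t) * 4 ^ t) (fun _ _ => Nat.zero_le _)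
      (mem_range.2 m.succ_pos)
  zify at hS ⊢
  rcases neg_one_pow_eq_or ℤ m with h | h <;> rw [h] at hid <;> linarith

def motzkin (m : ℕ) : ℕ := ∑ t ∈ range (m + 1), m.choose (2 * t) * catalan t

theorem four_pow_le_mul_catalan (t : ℕ) : 4 ^ t ≤ (2 * t + 1) * ((t + 1) * catalan t) := by
  rw [succ_mul_catalan_eq_centralBinom]
  exact Nat.four_pow_le_two_mul_add_one_mul_central_binom t

theorem three_pow_le_mul_motzkin (m : ℕ) :
    3 ^ m ≤ 3 * (2 * m + 1) * (m + 1) * motzkin m := by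
  calc 3 ^ m ≤ 3 * ∑ t ∈ range (m + 1), m.choose (2 * t) * 4 ^ t :=
        three_pow_le_three_mul_sum_choose_mul_four_pow m
    _ ≤ 3 * ∑ t ∈ range (m + 1),
          m.choose (2 * t) * ((2 * m + 1) * ((m + 1) * catalan t)) := by
        gcongr with t ht
        have htm : t ≤ m := Nat.lt_succ_iff.1 (mem_range.1 ht)
        calc 4 ^ t ≤ (2 * t + 1) * ((t + 1) * catalan t) := four_pow_le_mul_catalan t
          _ ≤ (2 * m + 1) * ((m + 1) * catalan t) := by gcongr
    _ = 3 * (2 * m + 1) * (m + 1) * motzkin m := by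
        rw [motzkin, mul_sum, mul_sum]
        exact sum_congr rfl fun t _ => by ring

theorem eventually_const_mul_pow_mul_pow_le_pow (C : ℝ) (k : ℕ) {a b : ℝ} (ha : 0 ≤ a)
    (hab : a < b) : ∀ᶠ n : ℕ in atTop, C * ((n : ℝ) ^ k * a ^ n) ≤ b ^ n := by
  have hlittle := (isLittleO_pow_const_mul_const_pow_const_pow_of_norm_lt k
    (by rwa [Real.norm_of_nonneg ha] : ‖a‖ < b)).const_mul_left C
  filter_upwards [hlittle.bound one_pos] with n hn
  rw [one_mul, Real.norm_of_nonneg (pow_nonneg (ha.trans hab.le) n)] at hn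
  exact (le_abs_self _).trans hn

theorem eventually_pow_le_pow_sub_sqrt {a b : ℝ} (hb : 0 < b) (hba : b < a) :
    ∀ᶠ n : ℕ in atTop, b ^ n ≤ a ^ (n - n.sqrt) := by
  have hc : 1 < a / b := (one_lt_div hb).2 hba
  obtain ⟨L, hL⟩ := pow_unbounded_of_one_lt b hc
  filter_upwards [eventually_ge_atTop ((L + 1) * (L + 1))] with n hn
  set s := n.sqrt
  have hLs : L * s ≤ n - s := by
    have hs : L + 1 ≤ s := Nat.le_sqrt.2 hn
    have : (L + 1) * s ≤ n := (Nat.mul_le_mul_right s hs).trans (Nat.sqrt_le n)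
    rw [add_one_mul] at this
    omega
  calc b ^ n = b ^ (n - s) * b ^ s := by rw [← pow_add, Nat.sub_add_cancel (Nat.sqrt_le_self n)]
    _ ≤ b ^ (n - s) * (a / b) ^ (n - s) := by
        gcongr
        calc b ^ s ≤ ((a / b) ^ L) ^ s := by gcongr
          _ = (a / b) ^ (L * s) := by rw [← pow_mul]
          _ ≤ (a / b) ^ (n - s) := pow_le_pow_right₀ hc.le hLs
    _ = a ^ (n - s) := by rw [← mul_pow, mul_div_cancel₀ _ hb.ne']

/-- For every 0 < ε < 3, eventually (3 - ε)^n ≤ Motz (n - ⌊√n⌋). -/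
theorem motzkin_truncated_exponential_lower_bound :
    ∀ ε : ℝ, 0 < ε → ε < 3 →
      ∀ᶠ n : ℕ in Filter.atTop,
        (3 - ε) ^ n ≤
          ((∑ t ∈ Finset.range (n - Nat.sqrt n + 1),
              (n - Nat.sqrt n).choose (2*t) * catalan t : ℕ) : ℝ) := by
  intro ε hε hε3
  filter_upwards [eventually_const_mul_pow_mul_pow_le_pow 18 2 (by linarith : 0 ≤ 3 - ε)
      (by linarith : 3 - ε < 3 - ε / 2),
    eventually_pow_le_pow_sub_sqrt (by linarith : 0 < 3 - ε / 2) (by linarith : 3 - ε / 2 < 3),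
    eventually_ge_atTop 1] with n hpoly hsqrt hn
  change (3 - ε) ^ n ≤ (motzkin (n - n.sqrt) : ℝ)
  set m := n - n.sqrt
  have hmn : (m : ℝ) ≤ n := by exact_mod_cast Nat.sub_le n n.sqrt
  have hn1 : (1 : ℝ) ≤ n := by exact_mod_cast hn
  have hmotz : (3 : ℝ) ^ m ≤ 3 * (2 * m + 1) * (m + 1) * motzkin m := by
    exact_mod_cast three_pow_le_mul_motzkin m
  have hD : 3 * (2 * (m : ℝ) + 1) * (m + 1) ≤ 18 * (n : ℝ) ^ 2 := by nlinarith
  have hε0 : 0 ≤ (3 - ε) ^ n := pow_nonneg (by linarith) n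
  refine le_of_mul_le_mul_left ?_ (by positivity : (0 : ℝ) < 3 * (2 * m + 1) * (m + 1))
  calc 3 * (2 * (m : ℝ) + 1) * (m + 1) * (3 - ε) ^ n
        ≤ 18 * ((n : ℝ) ^ 2 * (3 - ε) ^ n) := by
        rw [← mul_assoc]; exact mul_le_mul_of_nonneg_right hD hε0
    _ ≤ (3 - ε / 2) ^ n := hpoly
    _ ≤ 3 ^ m := hsqrt
    _ ≤ 3 * (2 * m + 1) * (m + 1) * motzkin m := hmotz
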